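/- (Fiedler's theorem) Let Λ_1 = (α_1, …, α_m) be a list of real numbers that is symmetrically realizable with α_1 ≥ α_i for all i, and let Λ_2 = (β_1, …, β_n) be a list of real numbers that is symmetrically realizable with β_1 ≥ β_j for all j. If α_1 ≥ β_1, then for every ε ≥ 0 the list (α_1 + ε, β_1 − ε, α_2, …, α_m, β_2, …, β_n) of length m + n is symmetrically realizable. -/

import Mathlib

/-!
Let `A`, `B` realize the two lists. Since `α_1` is the largest eigenvalue of `A`, the matrix
`α_1 • 1 - A` is positive semidefinite, and as `A ≥ 0`, replacing an eigenvector `w` by `|w|`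
can only increase `wᵀ A w`; hence `A` has a nonnegative unit eigenvector `u` for `α_1`, and
likewise `B` has one, `v`, for `β_1`. The matrix `[[A, ρ u vᵀ], [ρ v uᵀ, B]]` is symmetric and
nonnegative, and a Schur complement computation gives
`χ(x) (x - α_1) (x - β_1) = χ_A(x) χ_B(x) ((x - α_1) (x - β_1) - ρ²)`
at every `x` that is not an eigenvalue of `A` or `B`, hence as polynomials.
For `ρ² = ε (α_1 - β_1 + ε)` the quadratic factor is `(x - α_1 - ε) (x - β_1 + ε)`.
-/

open Polynomial Matrix Finset

/-- A list of real numbers is symmetrically realizable if it is the spectrum (counted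
with multiplicity) of a symmetric entrywise nonnegative real matrix. -/
def SymRealizable {n : ℕ} (l : Fin n → ℝ) : Prop :=
  ∃ A : Matrix (Fin n) (Fin n) ℝ, A.IsSymm ∧ (∀ i j, 0 ≤ A i j) ∧
    A.charpoly = ∏ i, (X - C (l i))

namespace Polynomial

theorem eq_of_eval_eq_of_eval_ne_zero {R : Type*} [CommRing R] [IsDomain R] [Infinite R]
    {p q P : R[X]} (hP : P ≠ 0) (h : ∀ x, P.eval x ≠ 0 → p.eval x = q.eval x) : p = q :=
  eq_of_infinite_eval_eq p q <| (finite_setOfPred_isRoot hP).infinite_compl.mono h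

variable {R : Type*} [CommRing R]

theorem prod_X_sub_C_append {m n : ℕ} (f : Fin m → R) (g : Fin n → R) :
    ∏ i, (X - C (Fin.append f g i)) = (∏ i, (X - C (f i))) * ∏ j, (X - C (g j)) := by
  simp [Fin.prod_univ_add]

theorem prod_X_sub_C_update_mul {ι : Type*} [Fintype ι] [DecidableEq ι] (f : ι → R) (i : ι)
    (c : R) : (∏ j, (X - C (Function.update f i c j))) * (X - C (f i)) =
      (X - C c) * ∏ j, (X - C (f j)) := by
  rw [← mul_prod_erase univ _ (mem_univ i),
    ← mul_prod_erase univ (fun j => X - C (f j)) (mem_univ i), Function.update_self,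
    prod_congr rfl fun j hj => by rw [Function.update_of_ne (ne_of_mem_erase hj)]]
  ring

end Polynomial

namespace Matrix

variable {ι κ : Type*}

theorem fromBlocks_nonneg {R : Type*} [Zero R] [LE R] {A : Matrix ι ι R} {B : Matrix ι κ R}
    {C : Matrix κ ι R} {D : Matrix κ κ R} (hA : ∀ i j, 0 ≤ A i j) (hB : ∀ i j, 0 ≤ B i j)
    (hC : ∀ i j, 0 ≤ C i j) (hD : ∀ i j, 0 ≤ D i j) : ∀ i j, 0 ≤ fromBlocks A B C D i j := by
  rintro (i | i) (j | j)
  exacts [hA i j, hB i j, hC i j, hD i j]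

variable [Fintype ι] [DecidableEq ι] [Fintype κ] [DecidableEq κ]

theorem isRoot_charpoly_iff_exists_mulVec_eq_smul {K : Type*} [Field K] (A : Matrix ι ι K)
    (r : K) : A.charpoly.IsRoot r ↔ ∃ w ≠ 0, A *ᵥ w = r • w := by
  rw [IsRoot.def, eval_charpoly, ← exists_mulVec_eq_zero_iff]
  simp only [sub_mulVec, scalar_apply, sub_eq_zero, eq_comm (a := A *ᵥ _),
    ← smul_one_eq_diagonal, smul_mulVec, one_mulVec]

theorem posSemidef_smul_one_sub_of_isRoot_le {A : Matrix ι ι ℝ} (hA : A.IsSymm) {a : ℝ}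
    (ha : ∀ r, A.charpoly.IsRoot r → r ≤ a) : (a • 1 - A).PosSemidef := by
  have hM : (a • 1 - A).IsHermitian := isHermitian_iff_isSymm.mpr ((isSymm_one.smul a).sub hA)
  refine hM.posSemidef_iff_eigenvalues_nonneg.mpr fun i => ?_
  have hy := hM.mulVec_eigenvectorBasis i
  rw [sub_mulVec, smul_mulVec, one_mulVec, sub_eq_iff_eq_add', ← sub_eq_iff_eq_add,
    ← sub_smul] at hy
  have hle := ha _ ((isRoot_charpoly_iff_exists_mulVec_eq_smul A _).mpr
    ⟨_, (WithLp.ofLp_eq_zero 2).not.mpr (hM.eigenvectorBasis.orthonormal.ne_zero i), hy.symm⟩)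
  change 0 ≤ hM.eigenvalues i
  linarith

omit [DecidableEq ι] in
theorem dotProduct_mulVec_le_abs {A : Matrix ι ι ℝ} (hA : ∀ i j, 0 ≤ A i j) (w : ι → ℝ) :
    w ⬝ᵥ (A *ᵥ w) ≤ |w| ⬝ᵥ (A *ᵥ |w|) := by
  simp only [dotProduct, mulVec, Finset.mul_sum]
  refine sum_le_sum fun i _ => sum_le_sum fun j _ => ?_
  calc w i * (A i j * w j) ≤ |w i * (A i j * w j)| := le_abs_self _
    _ = |w| i * (A i j * |w| j) := by simp [abs_mul, abs_of_nonneg (hA i j)]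

theorem mulVec_abs_eq_smul_of_posSemidef {A : Matrix ι ι ℝ} (hN : ∀ i j, 0 ≤ A i j) {a : ℝ}
    (hA : (a • 1 - A).PosSemidef) {w : ι → ℝ} (hw : A *ᵥ w = a • w) :
    A *ᵥ |w| = a • |w| := by
  have habs : |w| ⬝ᵥ |w| = w ⬝ᵥ w := sum_congr rfl fun i _ => by simp
  have hquad : ∀ x : ι → ℝ, x ⬝ᵥ ((a • 1 - A) *ᵥ x) = a * (x ⬝ᵥ x) - x ⬝ᵥ (A *ᵥ x) := by
    intro x
    rw [sub_mulVec, smul_mulVec, one_mulVec, dotProduct_sub, dotProduct_smul, smul_eq_mul]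
  have hzero : |w| ⬝ᵥ ((a • 1 - A) *ᵥ |w|) = 0 := by
    refine le_antisymm ?_ (by simpa using hA.dotProduct_mulVec_nonneg |w|)
    have hle := dotProduct_mulVec_le_abs hN w
    rw [hw, dotProduct_smul, smul_eq_mul] at hle
    rw [hquad, habs]
    linarith
  have hker := (hA.dotProduct_mulVec_zero_iff |w|).mp (by simpa using hzero)
  rwa [sub_mulVec, smul_mulVec, one_mulVec, sub_eq_zero, eq_comm] at hker

theorem exists_nonneg_unit_eigenvector {A : Matrix ι ι ℝ} (hA : A.IsSymm)
    (hN : ∀ i j, 0 ≤ A i j) {a : ℝ} (ha : A.charpoly.IsRoot a)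
    (hmax : ∀ r, A.charpoly.IsRoot r → r ≤ a) :
    ∃ u, 0 ≤ u ∧ u ⬝ᵥ u = 1 ∧ A *ᵥ u = a • u := by
  obtain ⟨w, hw0, hw⟩ := (isRoot_charpoly_iff_exists_mulVec_eq_smul A a).mp ha
  have hpos : 0 < |w| ⬝ᵥ |w| :=
    (dotProduct_self_star_nonneg |w|).lt_of_ne' (by simpa using hw0)
  refine ⟨(√(|w| ⬝ᵥ |w|))⁻¹ • |w|, smul_nonneg (by positivity) (abs_nonneg w), ?_, ?_⟩
  · rw [smul_dotProduct, dotProduct_smul, smul_smul, smul_eq_mul, ← mul_inv,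
      Real.mul_self_sqrt hpos.le, inv_mul_cancel₀ hpos.ne']
  · rw [mulVec_smul, smul_comm, mulVec_abs_eq_smul_of_posSemidef hN
      (posSemidef_smul_one_sub_of_isRoot_le hA hmax) hw]

theorem exists_nonneg_unit_eigenvector_of_charpoly_eq_prod {A : Matrix ι ι ℝ} (hA : A.IsSymm)
    (hN : ∀ i j, 0 ≤ A i j) {l : ι → ℝ} (hl : A.charpoly = ∏ i, (X - C (l i))) {i₀ : ι}
    (hmax : ∀ i, l i ≤ l i₀) : ∃ u, 0 ≤ u ∧ u ⬝ᵥ u = 1 ∧ A *ᵥ u = l i₀ • u := by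
  have hroot : ∀ r, A.charpoly.IsRoot r ↔ ∃ i, l i = r := by
    simp only [hl, isRoot_prod, mem_univ, true_and, root_X_sub_C, implies_true]
  refine exists_nonneg_unit_eigenvector hA hN ((hroot _).mpr ⟨i₀, rfl⟩) fun r hr => ?_
  obtain ⟨i, rfl⟩ := (hroot r).mp hr
  exact hmax i

theorem scalar_sub_fromBlocks {R : Type*} [CommRing R] (x : R) (A : Matrix ι ι R)
    (B : Matrix ι κ R) (C : Matrix κ ι R) (D : Matrix κ κ R) :
    scalar (ι ⊕ κ) x - fromBlocks A B C D =
      fromBlocks (scalar ι x - A) (-B) (-C) (scalar κ x - D) := by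
  ext (i | i) (j | j) <;> simp [scalar_apply, diagonal_apply]

theorem scalar_sub_mulVec_eq_smul {R : Type*} [CommRing R] {A : Matrix ι ι R} {u : ι → R}
    {a : R} (hu : A *ᵥ u = a • u) (x : R) : (scalar ι x - A) *ᵥ u = (x - a) • u := by
  rw [sub_mulVec, hu, scalar_apply, ← smul_one_eq_diagonal, smul_mulVec, one_mulVec, sub_smul]

section Field

variable {K : Type*} [Field K]

theorem inv_mulVec_eq_inv_smul {M : Matrix ι ι K} (hM : IsUnit M.det) {u : ι → K} {c : K}
    (hc : c ≠ 0) (hu : M *ᵥ u = c • u) : M⁻¹ *ᵥ u = c⁻¹ • u := by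
  rw [eq_inv_smul_iff₀ hc, ← mulVec_smul, ← hu, mulVec_mulVec, nonsing_inv_mul _ hM, one_mulVec]

theorem det_sub_smul_vecMulVec_self {M : Matrix κ κ K} {v : κ → K} {c : K} (hc : c ≠ 0)
    (hv : M *ᵥ v = c • v) (hv1 : v ⬝ᵥ v = 1) (s : K) :
    (M - s • vecMulVec v v).det = M.det * (1 - s * c⁻¹) := by
  have hfactor : M - s • vecMulVec v v =
      M * (1 + replicateCol Unit (-(s * c⁻¹) • v) * replicateRow Unit v) := by
    rw [← vecMulVec_eq, Matrix.mul_add, Matrix.mul_one, mul_vecMulVec, mulVec_smul, hv, smul_smul,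
      neg_mul, mul_assoc, inv_mul_cancel₀ hc, mul_one, neg_smul, neg_vecMulVec, smul_vecMulVec,
      ← sub_eq_add_neg]
  rw [hfactor, det_mul, det_one_add_replicateCol_mul_replicateRow, dotProduct_smul, hv1,
    smul_eq_mul, mul_one, ← sub_eq_add_neg]

theorem det_fromBlocks_neg_smul_vecMulVec {M₁ : Matrix ι ι K} {M₂ : Matrix κ κ K}
    (h₁ : IsUnit M₁.det) {u : ι → K} {v : κ → K} {a b : K} (ha : a ≠ 0) (hb : b ≠ 0)
    (hu : M₁ *ᵥ u = a • u) (hv : M₂ *ᵥ v = b • v) (hu1 : u ⬝ᵥ u = 1) (hv1 : v ⬝ᵥ v = 1)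
    (r : K) :
    (fromBlocks M₁ (-(r • vecMulVec u v)) (-(r • vecMulVec v u)) M₂).det * (a * b) =
      M₁.det * M₂.det * (a * b - r ^ 2) := by
  let _ := M₁.invertibleOfIsUnitDet h₁
  have hschur : -(r • vecMulVec v u) * M₁⁻¹ * -(r • vecMulVec u v) =
      (r ^ 2 * a⁻¹) • vecMulVec v v := by
    rw [Matrix.neg_mul, Matrix.neg_mul, Matrix.mul_neg, neg_neg, Matrix.smul_mul, Matrix.smul_mul,
      Matrix.mul_smul, Matrix.mul_assoc, mul_vecMulVec, inv_mulVec_eq_inv_smul h₁ ha hu,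
      vecMulVec_mul_vecMulVec, dotProduct_smul, hu1, smul_eq_mul, mul_one, vecMulVec_smul,
      smul_smul, smul_smul, sq]
  rw [det_fromBlocks₁₁, invOf_eq_nonsing_inv, hschur, det_sub_smul_vecMulVec_self hb hv hv1]
  field_simp

theorem charpoly_fromBlocks_smul_vecMulVec [Infinite K] {A : Matrix ι ι K} {B : Matrix κ κ K}
    {u : ι → K} {v : κ → K} {a b : K}
    (hu : A *ᵥ u = a • u) (hv : B *ᵥ v = b • v) (hu1 : u ⬝ᵥ u = 1) (hv1 : v ⬝ᵥ v = 1) (ρ : K) :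
    (fromBlocks A (ρ • vecMulVec u v) (ρ • vecMulVec v u) B).charpoly * ((X - C a) * (X - C b)) =
      A.charpoly * B.charpoly * ((X - C a) * (X - C b) - C (ρ ^ 2)) := by
  refine eq_of_eval_eq_of_eval_ne_zero
    (mul_ne_zero (mul_ne_zero A.charpoly_monic.ne_zero B.charpoly_monic.ne_zero)
      (mul_ne_zero (X_sub_C_ne_zero a) (X_sub_C_ne_zero b))) fun x hx => ?_
  simp only [eval_mul, eval_sub, eval_X, eval_C, eval_charpoly, mul_ne_zero_iff] at hx ⊢
  obtain ⟨⟨hA, -⟩, hxa, hxb⟩ := hx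
  rw [scalar_sub_fromBlocks]
  exact det_fromBlocks_neg_smul_vecMulVec (isUnit_iff_ne_zero.mpr hA) hxa hxb
    (scalar_sub_mulVec_eq_smul hu x) (scalar_sub_mulVec_eq_smul hv x) hu1 hv1 ρ

end Field

end Matrix

/-- **Fiedler's theorem.** If `(α_1, …, α_m)` and `(β_1, …, β_n)` are symmetrically
realizable with dominant entries `α_1` and `β_1` and `α_1 ≥ β_1`, then for every
`ε ≥ 0` the list `(α_1 + ε, β_1 - ε, α_2, …, α_m, β_2, …, β_n)` is symmetrically
realizable. -/
theorem fiedler (m n : ℕ) (hm : 0 < m) (hn : 0 < n)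
    (α : Fin m → ℝ) (β : Fin n → ℝ)
    (hα : ∀ i, α i ≤ α ⟨0, hm⟩) (hβ : ∀ j, β j ≤ β ⟨0, hn⟩)
    (h1 : SymRealizable α) (h2 : SymRealizable β)
    (hab : β ⟨0, hn⟩ ≤ α ⟨0, hm⟩) (ε : ℝ) (hε : 0 ≤ ε) :
    SymRealizable (Fin.append (Function.update α ⟨0, hm⟩ (α ⟨0, hm⟩ + ε))
      (Function.update β ⟨0, hn⟩ (β ⟨0, hn⟩ - ε))) := by
  obtain ⟨A, hAs, hAn, hAc⟩ := h1
  obtain ⟨B, hBs, hBn, hBc⟩ := h2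
  obtain ⟨u, hu0, hu1, hu⟩ := exists_nonneg_unit_eigenvector_of_charpoly_eq_prod hAs hAn hAc hα
  obtain ⟨v, hv0, hv1, hv⟩ := exists_nonneg_unit_eigenvector_of_charpoly_eq_prod hBs hBn hBc hβ
  set a := α ⟨0, hm⟩
  set b := β ⟨0, hn⟩
  set ρ := √(ε * (a - b + ε))
  have hρ : (X - C a) * (X - C b) - C (ρ ^ 2) = (X - C (a + ε)) * (X - C (b - ε)) := by
    rw [Real.sq_sqrt (mul_nonneg hε (by linarith))]
    simp only [C_add, C_sub, C_mul]
    ring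
  refine ⟨reindex finSumFinEquiv finSumFinEquiv
    (fromBlocks A (ρ • vecMulVec u v) (ρ • vecMulVec v u) B), ?_, fun i j => ?_, ?_⟩
  · exact (hAs.fromBlocks (by rw [transpose_smul, transpose_vecMulVec]) hBs).reindex _
  · exact fromBlocks_nonneg hAn
      (fun i j => smul_nonneg (Real.sqrt_nonneg _) (mul_nonneg (hu0 i) (hv0 j)))
      (fun i j => smul_nonneg (Real.sqrt_nonneg _) (mul_nonneg (hv0 i) (hu0 j))) hBn _ _
  · apply mul_right_cancel₀ (mul_ne_zero (X_sub_C_ne_zero a) (X_sub_C_ne_zero b))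
    rw [charpoly_reindex, charpoly_fromBlocks_smul_vecMulVec hu hv hu1 hv1, hρ,
      prod_X_sub_C_append, hAc, hBc]
    linear_combination -congrArg₂ (· * ·) (prod_X_sub_C_update_mul α ⟨0, hm⟩ (a + ε))
      (prod_X_sub_C_update_mul β ⟨0, hn⟩ (b - ε))
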